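/- arXiv:1612.05201 — 2 statements merged into one kernel-verified Lean document; each statement's English description precedes it below -/
import Mathlib

section
/- Let A and C be n×n Laplacian matrices satisfying AC = A and C² = C, and let δ > 0. Then the eigenprojection of A + δC equals (I − C)(I + δ⁻¹A)⁻¹, where I + δ⁻¹A is invertible. -/
open Matrix Filter Topology

/-- The index of a square real matrix: the smallest `k` with
`rank (A^(k+1)) = rank (A^k)`. -/
noncomputable def matIndex {m : Type*} [Fintype m] [DecidableEq m]
    (A : Matrix m m ℝ) : ℕ :=
  sInf {k : ℕ | (A ^ (k + 1)).rank = (A ^ k).rank}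

/-- `Q` is the eigenprojection of `A` corresponding to the eigenvalue `0`:
an idempotent matrix whose range is the null space of `A ^ ind A` and whose
null space is the range of `A ^ ind A`. -/
def IsEigenprojection {m : Type*} [Fintype m] [DecidableEq m]
    (A Q : Matrix m m ℝ) : Prop :=
  Q * Q = Q ∧
  LinearMap.range Q.mulVecLin = LinearMap.ker (A ^ matIndex A).mulVecLin ∧
  LinearMap.ker Q.mulVecLin = LinearMap.range (A ^ matIndex A).mulVecLin

/-- A Laplacian matrix: nonpositive off-diagonal entries and zero row sums. -/
def IsLaplacian {m : Type*} [Fintype m] (L : Matrix m m ℝ) : Prop :=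
  (∀ i j, i ≠ j → L i j ≤ 0) ∧ ∀ i, ∑ j, L i j = 0

/-!
Write `M = I + δ⁻¹A`, `B = A + δC` and `Q = (I - C)M⁻¹`. Because `AC = A` we have `B = M(δC)`, and
because `C² = C` this gives `BQ = QB = 0`; moreover `Q + B(δ⁻¹M⁻¹) = I`. These identities make `Q` the
eigenprojection of `B` as soon as `B` has index at most one. Both that and the invertibility of `M`
come from one estimate: for a Laplacian `L` the resolvent `(I + L)⁻¹` does not expand the sup norm,
by diagonal dominance at a coordinate where `|xᵢ|` is maximal.
-/

section Laplacian

variable {m : Type*} [Fintype m] {L L' : Matrix m m ℝ}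

theorem IsLaplacian.add (hL : IsLaplacian L) (hL' : IsLaplacian L') : IsLaplacian (L + L') :=
  ⟨fun i j hij => by simpa using add_nonpos (hL.1 i j hij) (hL'.1 i j hij),
    fun i => by simp [Finset.sum_add_distrib, hL.2 i, hL'.2 i]⟩

theorem IsLaplacian.smul (hL : IsLaplacian L) {c : ℝ} (hc : 0 ≤ c) : IsLaplacian (c • L) :=
  ⟨fun i j hij => by simpa using mul_nonpos_of_nonneg_of_nonpos hc (hL.1 i j hij),
    fun i => by simp [← Finset.mul_sum, hL.2 i]⟩

variable [DecidableEq m]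

theorem IsLaplacian.sum_erase_eq_neg_diag (hL : IsLaplacian L) (i : m) :
    ∑ j ∈ Finset.univ.erase i, L i j = -L i i := by
  linarith [hL.2 i, Finset.add_sum_erase Finset.univ (L i) (Finset.mem_univ i)]

theorem IsLaplacian.abs_sum_erase_mul_le (hL : IsLaplacian L) {x : m → ℝ} {i : m}
    (hi : ∀ j, |x j| ≤ |x i|) :
    |∑ j ∈ Finset.univ.erase i, L i j * x j| ≤ L i i * |x i| :=
  calc |∑ j ∈ Finset.univ.erase i, L i j * x j|
      ≤ ∑ j ∈ Finset.univ.erase i, -L i j * |x i| := by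
        refine (Finset.abs_sum_le_sum_abs _ _).trans (Finset.sum_le_sum fun j hj => ?_)
        have hLij := hL.1 i j (Finset.ne_of_mem_erase hj).symm
        rw [abs_mul, abs_of_nonpos hLij]
        exact mul_le_mul_of_nonneg_left (hi j) (neg_nonneg.2 hLij)
    _ = L i i * |x i| := by
        rw [← Finset.sum_mul, Finset.sum_neg_distrib, hL.sum_erase_eq_neg_diag, neg_neg]

theorem IsLaplacian.norm_le_norm_mulVec_add (hL : IsLaplacian L) (x : m → ℝ) :
    ‖x‖ ≤ ‖L *ᵥ x + x‖ := by
  rcases isEmpty_or_nonempty m with hm | hm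
  · rw [Subsingleton.elim x 0]
    simp
  obtain ⟨i, -, hi⟩ := Finset.univ.exists_max_image (fun j => |x j|) Finset.univ_nonempty
  have hi : ∀ j, |x j| ≤ |x i| := fun j => hi j (Finset.mem_univ j)
  have hrow : (L *ᵥ x + x) i = (L i i + 1) * x i + ∑ j ∈ Finset.univ.erase i, L i j * x j := by
    rw [Pi.add_apply, mulVec, dotProduct, ← Finset.add_sum_erase _ _ (Finset.mem_univ i)]
    ring
  calc ‖x‖ = (L i i + 1) * |x i| - L i i * |x i| := by
        rw [(pi_norm_le_iff_of_nonneg (abs_nonneg _)).2 hi |>.antisymm (norm_le_pi_norm x i)]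
        ring
    _ ≤ |(L i i + 1) * x i| - |∑ j ∈ Finset.univ.erase i, L i j * x j| := by
        gcongr
        · rw [abs_mul]
          exact mul_le_mul_of_nonneg_right (le_abs_self _) (abs_nonneg _)
        · exact hL.abs_sum_erase_mul_le hi
    _ ≤ |(L *ᵥ x + x) i| := hrow ▸ abs_sub_abs_le_abs_add _ _
    _ ≤ ‖L *ᵥ x + x‖ := norm_le_pi_norm (L *ᵥ x + x) i

theorem IsLaplacian.isUnit_one_add_smul (hL : IsLaplacian L) {c : ℝ} (hc : 0 ≤ c) :
    IsUnit (1 + c • L) := by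
  refine mulVec_injective_iff_isUnit.1 fun x y hxy => sub_eq_zero.1 (norm_le_zero_iff.1 ?_)
  calc ‖x - y‖ ≤ ‖(c • L) *ᵥ (x - y) + (x - y)‖ := (hL.smul hc).norm_le_norm_mulVec_add _
    _ = 0 := by
      rw [← sub_eq_zero, ← mulVec_sub, add_mulVec, one_mulVec, add_comm] at hxy
      rw [hxy, norm_zero]

/-- If `L² v = 0`, then `(I + tL)(v - tLv) = v` for every `t ≥ 0`,
so the contraction estimate bounds `t ‖Lv‖` by `2 ‖v‖` uniformly in `t`. -/
theorem IsLaplacian.ker_mul_self_le (hL : IsLaplacian L) :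
    LinearMap.ker (L * L).mulVecLin ≤ LinearMap.ker L.mulVecLin := by
  intro v hv
  simp only [LinearMap.mem_ker, mulVecLin_apply, ← mulVec_mulVec] at hv ⊢
  set w := L *ᵥ v
  have hbound : ∀ t : ℝ, 0 ≤ t → t * ‖w‖ ≤ 2 * ‖v‖ := by
    intro t ht
    have hres : (t • L) *ᵥ (v - t • w) + (v - t • w) = v := by
      simp only [mulVec_sub, smul_mulVec, mulVec_smul, hv, smul_zero, sub_zero]
      abel
    have hcontr := (hL.smul ht).norm_le_norm_mulVec_add (v - t • w)
    rw [hres] at hcontr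
    calc t * ‖w‖ = ‖v - (v - t • w)‖ := by rw [sub_sub_cancel, norm_smul, Real.norm_of_nonneg ht]
      _ ≤ ‖v‖ + ‖v - t • w‖ := norm_sub_le _ _
      _ ≤ 2 * ‖v‖ := by linarith
  by_contra hw
  have hw : 0 < ‖w‖ := norm_pos_iff.2 hw
  have := hbound ((2 * ‖v‖ + 1) / ‖w‖) (by positivity)
  rw [div_mul_cancel₀ _ hw.ne'] at this
  linarith

end Laplacian

section Eigenprojection

variable {m : Type*} [Fintype m]

theorem rank_mul_self_eq_of_ker_le {K : Type*} [Field K] {B : Matrix m m K}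
    (hB : LinearMap.ker (B * B).mulVecLin ≤ LinearMap.ker B.mulVecLin) :
    (B * B).rank = B.rank := by
  have hker : LinearMap.ker (B * B).mulVecLin = LinearMap.ker B.mulVecLin :=
    hB.antisymm (by rw [mulVecLin_mul]; exact LinearMap.ker_le_ker_comp _ _)
  have h₁ := LinearMap.finrank_range_add_finrank_ker (B * B).mulVecLin
  have h₂ := LinearMap.finrank_range_add_finrank_ker B.mulVecLin
  rw [hker] at h₁
  rw [rank, rank]
  omega

variable [DecidableEq m] {B Q Y : Matrix m m ℝ}

/-- Since `sInf ∅ = 0` in `ℕ`, the hypothesis is what pins `matIndex B` down to `0` or `1`. -/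
theorem ker_pow_matIndex_and_range_pow_matIndex (h : (B * B).rank = B.rank) :
    LinearMap.ker (B ^ matIndex B).mulVecLin = LinearMap.ker B.mulVecLin ∧
      LinearMap.range (B ^ matIndex B).mulVecLin = LinearMap.range B.mulVecLin := by
  have h₁ : 1 ∈ {k : ℕ | (B ^ (k + 1)).rank = (B ^ k).rank} := by simpa [sq] using h
  have hmem : (B ^ (matIndex B + 1)).rank = (B ^ matIndex B).rank := Nat.sInf_mem ⟨1, h₁⟩
  have hle : matIndex B ≤ 1 := Nat.sInf_le h₁
  rcases Nat.le_one_iff_eq_zero_or_eq_one.1 hle with h0 | h1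
  · rw [h0, zero_add, pow_one, pow_zero, rank_one] at hmem
    have hrange : LinearMap.range B.mulVecLin = ⊤ :=
      Submodule.eq_top_of_finrank_eq (by rw [← rank, hmem, Module.finrank_fintype_fun_eq_card])
    rw [h0, pow_zero, mulVecLin_one, LinearMap.ker_id, LinearMap.range_id, hrange,
      LinearMap.ker_eq_bot_iff_range_eq_top.2 hrange]
    exact ⟨rfl, rfl⟩
  · rw [h1, pow_one]
    exact ⟨rfl, rfl⟩

theorem isEigenprojection_of_add_mul_eq_one
    (hB : LinearMap.ker (B * B).mulVecLin ≤ LinearMap.ker B.mulVecLin)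
    (hBQ : B * Q = 0) (hQB : Q * B = 0) (hQY : Q + B * Y = 1) : IsEigenprojection B Q := by
  obtain ⟨hker, hrange⟩ := ker_pow_matIndex_and_range_pow_matIndex (rank_mul_self_eq_of_ker_le hB)
  have hsplit : ∀ x, Q *ᵥ x + B *ᵥ (Y *ᵥ x) = x := fun x => by
    rw [mulVec_mulVec, ← add_mulVec, hQY, one_mulVec]
  refine ⟨?_, ?_, ?_⟩
  · simpa [mul_add, ← mul_assoc, hQB] using congrArg (Q * ·) hQY
  · rw [hker]
    refine le_antisymm ?_ ?_
    · rintro _ ⟨x, rfl⟩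
      simp [mulVec_mulVec, hBQ]
    · intro x hx
      rw [LinearMap.mem_ker, mulVecLin_apply] at hx
      have hBBYx : B *ᵥ (B *ᵥ (Y *ᵥ x)) = 0 := by
        have := congrArg (B *ᵥ ·) (hsplit x)
        simp only [mulVec_add, mulVec_mulVec x B Q, hBQ, zero_mulVec, zero_add, hx] at this
        exact this
      have hBYx : B *ᵥ (Y *ᵥ x) = 0 := hB (by simpa [mulVec_mulVec] using hBBYx)
      refine ⟨x, ?_⟩
      simpa only [hBYx, add_zero, mulVecLin_apply] using hsplit x
  · rw [hrange]
    refine le_antisymm ?_ ?_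
    · intro x hx
      rw [LinearMap.mem_ker, mulVecLin_apply] at hx
      refine ⟨Y *ᵥ x, ?_⟩
      simpa only [hx, zero_add, mulVecLin_apply] using hsplit x
    · rintro _ ⟨x, rfl⟩
      simp [mulVec_mulVec, hQB]

end Eigenprojection

/-- For Laplacian matrices `A`, `C` with `AC = A`, `C² = C` and `δ > 0`,
the matrix `I + δ⁻¹A` is invertible and the eigenprojection of `A + δC`
equals `(I - C)(I + δ⁻¹A)⁻¹`. -/
theorem eigenprojection_of_sum {n : ℕ} (A C : Matrix (Fin n) (Fin n) ℝ)
    (hA : IsLaplacian A) (hC : IsLaplacian C)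
    (hAC : A * C = A) (hCC : C * C = C) (δ : ℝ) (hδ : 0 < δ) :
    IsUnit (1 + δ⁻¹ • A) ∧
    IsEigenprojection (A + δ • C) ((1 - C) * (1 + δ⁻¹ • A)⁻¹) := by
  set M := 1 + δ⁻¹ • A with hM_def
  have hM : IsUnit M := hA.isUnit_one_add_smul (inv_nonneg.2 hδ.le)
  have hMinv : M * M⁻¹ = 1 := mul_nonsing_inv M ((isUnit_iff_isUnit_det M).1 hM)
  have hinvM : M⁻¹ * M = 1 := nonsing_inv_mul M ((isUnit_iff_isUnit_det M).1 hM)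
  have hB : A + δ • C = M * (δ • C) := by
    rw [add_mul, one_mul, smul_mul_smul_comm, inv_mul_cancel₀ hδ.ne', one_smul, hAC, add_comm]
  have hC1C : C * (1 - C) = 0 := by rw [mul_sub, mul_one, hCC, sub_self]
  have h1CC : (1 - C) * C = 0 := by rw [sub_mul, one_mul, hCC, sub_self]
  refine ⟨hM, isEigenprojection_of_add_mul_eq_one (Y := δ⁻¹ • M⁻¹)
    (hA.add (hC.smul hδ.le)).ker_mul_self_le ?_ ?_ ?_⟩
  · rw [hB, mul_assoc, smul_mul_assoc, ← mul_assoc C, hC1C, zero_mul, smul_zero, mul_zero]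
  · rw [hB, mul_assoc, ← mul_assoc M⁻¹, hinvM, one_mul, mul_smul_comm, h1CC, smul_zero]
  · calc (1 - C) * M⁻¹ + (A + δ • C) * (δ⁻¹ • M⁻¹) = M * M⁻¹ := by
          rw [mul_smul_comm, ← smul_mul_assoc, ← add_mul]
          congr 1
          rw [hM_def, smul_add, smul_smul, inv_mul_cancel₀ hδ.ne', one_smul]
          abel
      _ = 1 := hMinv
end

section
/- Let L be an n×n Laplacian matrix, let v ∈ ℝⁿ have nonnegative entries with s = Σᵢ vᵢ, and let δ > 0. Then the eigenprojection of the (n+1)×(n+1) matrix L₀ + H_{δ,v} equals the rank-one matrix 1′·(1/(s+δ))·[vᵀ(I + δ⁻¹L)⁻¹ δ], i.e., the outer product of the all-ones column vector 1′ of length n+1 with the row vector of length n+1 whose first n entries are (1/(s+δ))·vᵀ(I + δ⁻¹L)⁻¹ and whose last entry is δ/(s+δ). -/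
open Matrix Filter Topology

/-- The block matrix `L₀ = [[L, 0], [0ᵀ, 0]]`. -/
def hubL0 {n : ℕ} (L : Matrix (Fin n) (Fin n) ℝ) :
    Matrix (Fin n ⊕ Unit) (Fin n ⊕ Unit) ℝ :=
  Matrix.fromBlocks L 0 0 0

/-- The block matrix `H_I = [[I, -1], [0ᵀ, 0]]`. -/
def hubHI (n : ℕ) : Matrix (Fin n ⊕ Unit) (Fin n ⊕ Unit) ℝ :=
  Matrix.fromBlocks 1 (Matrix.of fun _ _ => (-1 : ℝ)) 0 0

/-- The block matrix `H_v = [[0, 0], [-vᵀ, s]]` where `s = Σᵢ vᵢ`. -/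
def hubHv {n : ℕ} (v : Fin n → ℝ) : Matrix (Fin n ⊕ Unit) (Fin n ⊕ Unit) ℝ :=
  Matrix.fromBlocks 0 0 (Matrix.of fun _ j => -v j) (Matrix.of fun _ _ => ∑ i, v i)

/-- `H_{δ,v} = δ·H_I + H_v`. -/
def hubH {n : ℕ} (δ : ℝ) (v : Fin n → ℝ) :
    Matrix (Fin n ⊕ Unit) (Fin n ⊕ Unit) ℝ :=
  δ • hubHI n + hubHv v

/-! The matrix `A = L₀ + H_{δ,v}` kills `1′`, and since a Laplacian shifted by `δ > 0` is
strictly diagonally dominant, `L + δ I` is nonsingular and `ker A` is exactly the line through `1′`.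
The row `w = (s + δ)⁻¹ [vᵀ(I + δ⁻¹L)⁻¹, δ]` is a left null vector of `A` with `w 1′ = 1`: the
entries of `vᵀ(I + δ⁻¹L)⁻¹` sum to `s` because `(I + δ⁻¹L) 1 = 1`. Whenever `ker A = span e` and
`w A = 0`, `w e = 1`, every `x` with `A² x = 0` has `A x = (w A x) e = 0`, so `ind A = 1`, and the
rank-one idempotent `e w` has range `ker A` and null space `range A` by a dimension count. -/

section Eigenprojection

lemma Matrix.rank_add_finrank_ker {m n K : Type*} [Fintype n] [Field K] (A : Matrix m n K) :
    A.rank + Module.finrank K (LinearMap.ker A.mulVecLin) = Fintype.card n := by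
  simpa [Matrix.rank] using LinearMap.finrank_range_add_finrank_ker A.mulVecLin

variable {m : Type*} [Fintype m] {A : Matrix m m ℝ} {e w : m → ℝ}

lemma ker_mulVecLin_mul_self_eq (hker : LinearMap.ker A.mulVecLin = Submodule.span ℝ {e})
    (hw : w ᵥ* A = 0) (hwe : w ⬝ᵥ e = 1) :
    LinearMap.ker (A * A).mulVecLin = LinearMap.ker A.mulVecLin := by
  refine le_antisymm (fun x hx => ?_) (fun x hx => ?_)
  · have hAx : A *ᵥ x ∈ LinearMap.ker A.mulVecLin := by simpa [mulVec_mulVec] using hx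
    obtain ⟨c, hc⟩ := Submodule.mem_span_singleton.1 (hker ▸ hAx)
    have hc0 : c = 0 := calc
      c = w ⬝ᵥ (c • e) := by simp [hwe]
      _ = (w ᵥ* A) ⬝ᵥ x := by rw [hc, dotProduct_mulVec]
      _ = 0 := by rw [hw, zero_dotProduct]
    simpa [hc0] using hc.symm
  · rw [LinearMap.mem_ker, mulVecLin_apply] at hx ⊢
    rw [← mulVec_mulVec, hx, mulVec_zero]

variable [DecidableEq m]

lemma matIndex_eq_one (hsq : (A * A).rank = A.rank)
    (hsing : A.rank ≠ Fintype.card m) : matIndex A = 1 := by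
  have h1 : 1 ∈ {k : ℕ | (A ^ (k + 1)).rank = (A ^ k).rank} := by
    simpa [sq] using hsq
  have h0 : 0 ∉ {k : ℕ | (A ^ (k + 1)).rank = (A ^ k).rank} := by
    simpa [rank_one] using hsing
  refine le_antisymm (Nat.sInf_le h1) (Nat.one_le_iff_ne_zero.2 fun h => ?_)
  rcases Nat.sInf_eq_zero.1 h with h | h
  · exact h0 h
  · exact h.subset h1

theorem isEigenprojection_vecMulVec
    (hker : LinearMap.ker A.mulVecLin = Submodule.span ℝ {e})
    (hw : w ᵥ* A = 0) (hwe : w ⬝ᵥ e = 1) :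
    IsEigenprojection A (vecMulVec e w) := by
  have he : e ≠ 0 := by rintro rfl; simp at hwe
  have hQ (x : m → ℝ) : vecMulVec e w *ᵥ x = (w ⬝ᵥ x) • e := by
    rw [vecMulVec_mulVec, op_smul_eq_smul]
  have hrangeQ : LinearMap.range (vecMulVec e w).mulVecLin = Submodule.span ℝ {e} := by
    refine le_antisymm ?_ (Submodule.span_le.2 <| Set.singleton_subset_iff.2 ⟨e, ?_⟩)
    · rintro _ ⟨x, rfl⟩
      exact Submodule.mem_span_singleton.2 ⟨_, (hQ x).symm⟩
    · simp [hQ, hwe]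
  have hrankA : A.rank + 1 = Fintype.card m := by
    have := rank_add_finrank_ker A
    rwa [hker, finrank_span_singleton he] at this
  have hidx : matIndex A = 1 := by
    refine matIndex_eq_one ?_ (by omega)
    have := rank_add_finrank_ker (A * A)
    rw [ker_mulVecLin_mul_self_eq hker hw hwe, hker, finrank_span_singleton he] at this
    omega
  refine ⟨by rw [vecMulVec_mul_vecMulVec, hwe, one_smul], ?_, ?_⟩
  · rw [hidx, pow_one, hrangeQ, hker]
  · rw [hidx, pow_one]
    have hQA : vecMulVec e w * A = 0 := by rw [vecMulVec_mul, hw]; simp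
    refine (Submodule.eq_of_le_of_finrank_eq ?_ ?_).symm
    · rintro _ ⟨x, rfl⟩
      simp [mulVec_mulVec, hQA]
    · have := rank_add_finrank_ker (vecMulVec e w)
      rw [Matrix.rank, hrangeQ, finrank_span_singleton he] at this
      change A.rank = _
      omega

end Eigenprojection

namespace IsLaplacian

variable {m : Type*} [Fintype m] {L : Matrix m m ℝ}

lemma mulVec_one (hL : IsLaplacian L) : L *ᵥ 1 = 0 := by
  ext i
  simpa [mulVec, dotProduct] using hL.2 i

lemma diag_eq_neg_sum_erase [DecidableEq m] (hL : IsLaplacian L) (i : m) :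
    L i i = -∑ j ∈ Finset.univ.erase i, L i j := by
  rw [eq_neg_iff_add_eq_zero, Finset.add_sum_erase _ _ (Finset.mem_univ i), hL.2 i]

variable [DecidableEq m]

lemma one_add_smul_mulVec_one (hL : IsLaplacian L) (c : ℝ) : (1 + c • L) *ᵥ 1 = 1 := by
  rw [add_mulVec, one_mulVec, smul_mulVec, hL.mulVec_one, smul_zero, add_zero]

/-- `1 + c • L` is strictly diagonally dominant, hence nonsingular. -/
lemma isUnit_det_one_add_smul (hL : IsLaplacian L) {c : ℝ} (hc : 0 ≤ c) :
    IsUnit (1 + c • L).det := by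
  refine isUnit_iff_ne_zero.2 (det_ne_zero_of_sum_row_lt_diag fun k => ?_)
  have hoff : ∀ j ∈ Finset.univ.erase k, ‖(1 + c • L) k j‖ = -(c * L k j) := fun j hj => by
    have hjk := Finset.ne_of_mem_erase hj
    rw [Matrix.add_apply, one_apply_ne' hjk, Matrix.smul_apply, smul_eq_mul, zero_add,
      Real.norm_eq_abs, abs_of_nonpos (mul_nonpos_of_nonneg_of_nonpos hc (hL.1 k j hjk.symm))]
  have hdiag : 0 ≤ L k k := by
    rw [hL.diag_eq_neg_sum_erase k, neg_nonneg]
    exact Finset.sum_nonpos fun j hj => hL.1 k j (Finset.ne_of_mem_erase hj).symm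
  rw [Finset.sum_congr rfl hoff, Finset.sum_neg_distrib, ← Finset.mul_sum, Matrix.add_apply,
    one_apply_eq, Matrix.smul_apply, smul_eq_mul, Real.norm_eq_abs, abs_of_nonneg (by positivity)]
  rw [← mul_neg, ← hL.diag_eq_neg_sum_erase k]
  linarith

lemma sum_vecMul_inv_one_add_smul (hL : IsLaplacian L) {c : ℝ} (hc : 0 ≤ c) (v : m → ℝ) :
    ∑ j, (v ᵥ* (1 + c • L)⁻¹) j = ∑ i, v i := by
  have h : (1 + c • L)⁻¹ *ᵥ 1 = 1 := by
    conv_lhs => rw [← hL.one_add_smul_mulVec_one c]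
    rw [mulVec_mulVec, nonsing_inv_mul _ (hL.isUnit_det_one_add_smul hc), one_mulVec]
  rw [← dotProduct_one, ← dotProduct_mulVec, h, dotProduct_one]

end IsLaplacian

section Hub

variable {n : ℕ} (L : Matrix (Fin n) (Fin n) ℝ) (v : Fin n → ℝ) (δ : ℝ)

lemma hubL0_add_hubH_eq_fromBlocks :
    hubL0 L + hubH δ v =
      fromBlocks (L + δ • 1) (of fun _ _ => -δ) (of fun _ j => -v j) (of fun _ _ => ∑ i, v i) := by
  rw [hubL0, hubH, hubHI, hubHv, fromBlocks_smul, fromBlocks_add, fromBlocks_add]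
  ext (i | i) (j | j) <;> simp [add_comm]

lemma hubL0_add_hubH_mulVec_one (hL : L *ᵥ 1 = 0) : (hubL0 L + hubH δ v) *ᵥ 1 = 0 := by
  rw [hubL0_add_hubH_eq_fromBlocks, fromBlocks_mulVec]
  ext (i | i) <;> simp [add_mulVec, smul_mulVec, hL, mulVec, dotProduct]

lemma vecMul_hubL0_add_hubH_eq_zero {u : Fin n → ℝ} (hu : u ᵥ* (L + δ • 1) = δ • v)
    (hsum : ∑ j, u j = ∑ i, v i) :
    Sum.elim u (fun _ => δ) ᵥ* (hubL0 L + hubH δ v) = 0 := by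
  rw [hubL0_add_hubH_eq_fromBlocks, vecMul_fromBlocks]
  ext (j | j)
  · simp [hu, vecMul, dotProduct]
  · simp only [Sum.elim_comp_inl, Sum.elim_comp_inr, Sum.elim_inr, Pi.add_apply, vecMul,
      dotProduct, of_apply, mul_neg, Finset.sum_neg_distrib, Finset.univ_unique,
      PUnit.default_eq_unit, Finset.sum_const, Finset.card_singleton, one_smul, Pi.zero_apply]
    rw [← Finset.sum_mul, hsum]
    ring

lemma ker_hubL0_add_hubH (hL : L *ᵥ 1 = 0) (hinj : Function.Injective (L + δ • 1).mulVec) :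
    LinearMap.ker (hubL0 L + hubH δ v).mulVecLin = Submodule.span ℝ {1} := by
  refine le_antisymm (fun x hx => ?_) ?_
  · -- `y` is in the kernel and vanishes at the hub, so the nonsingular `L + δ • 1` kills its rest
    set y := x - x (Sum.inr ()) • 1
    have hy : (hubL0 L + hubH δ v) *ᵥ y = 0 := by
      rw [LinearMap.mem_ker, mulVecLin_apply] at hx
      rw [mulVec_sub, mulVec_smul, hx, hubL0_add_hubH_mulVec_one L v δ hL, smul_zero, sub_zero]
    have hy_inr : y ∘ Sum.inr = 0 := by
      ext ⟨⟩
      simp [y]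
    have hy_inl : y ∘ Sum.inl = 0 := by
      refine hinj ?_
      rw [hubL0_add_hubH_eq_fromBlocks, fromBlocks_mulVec, hy_inr] at hy
      simpa using congrArg (· ∘ Sum.inl) hy
    have hy0 : y = 0 := by
      ext (i | i)
      exacts [congrFun hy_inl i, congrFun hy_inr i]
    exact Submodule.mem_span_singleton.2 ⟨x (Sum.inr ()), (sub_eq_zero.1 hy0).symm⟩
  · rw [Submodule.span_le, Set.singleton_subset_iff]
    exact hubL0_add_hubH_mulVec_one L v δ hL

end Hub

/-- The eigenprojection of `L₀ + H_{δ,v}` is the outer product of the all-ones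
vector `1′` with the row vector `(1/(s+δ))·[vᵀ(I + δ⁻¹L)⁻¹  δ]`. -/
theorem eigenprojection_hub {n : ℕ} (L : Matrix (Fin n) (Fin n) ℝ)
    (hL : IsLaplacian L) (v : Fin n → ℝ) (hv : ∀ i, 0 ≤ v i)
    (δ : ℝ) (hδ : 0 < δ) :
    IsEigenprojection (hubL0 L + hubH δ v)
      (Matrix.vecMulVec (fun _ => (1 : ℝ))
        (Sum.elim
          (fun j => ((∑ i, v i) + δ)⁻¹ * (v ᵥ* (1 + δ⁻¹ • L)⁻¹) j)
          (fun _ => δ / ((∑ i, v i) + δ)))) := by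
  set M : Matrix (Fin n) (Fin n) ℝ := 1 + δ⁻¹ • L
  set u := v ᵥ* M⁻¹
  have hM : IsUnit M.det := hL.isUnit_det_one_add_smul (inv_nonneg.2 hδ.le)
  have hLδ : L + δ • 1 = δ • M := by
    rw [smul_add, smul_smul, mul_inv_cancel₀ hδ.ne', one_smul, add_comm]
  have hu : u ᵥ* (L + δ • 1) = δ • v := by
    rw [hLδ, vecMul_smul, vecMul_vecMul, nonsing_inv_mul _ hM, vecMul_one]
  have hsum : ∑ j, u j = ∑ i, v i := hL.sum_vecMul_inv_one_add_smul (inv_nonneg.2 hδ.le) v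
  have hsδ : (∑ i, v i) + δ ≠ 0 :=
    (add_pos_of_nonneg_of_pos (Finset.sum_nonneg fun i _ => hv i) hδ).ne'
  have hinj : Function.Injective (L + δ • 1).mulVec := by
    rw [mulVec_injective_iff_isUnit, hLδ, isUnit_iff_isUnit_det, det_smul]
    exact (hδ.ne'.isUnit.pow _).mul hM
  have hrow : Sum.elim (fun j => ((∑ i, v i) + δ)⁻¹ * u j)
      (fun _ : Unit => δ / ((∑ i, v i) + δ)) = ((∑ i, v i) + δ)⁻¹ • Sum.elim u (fun _ => δ) := by
    ext (j | j) <;> simp [div_eq_inv_mul]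
  rw [hrow, ← Pi.one_def]
  refine isEigenprojection_vecMulVec (ker_hubL0_add_hubH L v δ hL.mulVec_one hinj) ?_ ?_
  · rw [smul_vecMul, vecMul_hubL0_add_hubH_eq_zero L v δ hu hsum, smul_zero]
  · rw [smul_dotProduct, dotProduct_one, Fintype.sum_sum_type]
    simp only [Sum.elim_inl, Sum.elim_inr, hsum, Finset.univ_unique, Finset.sum_singleton,
      smul_eq_mul]
    exact inv_mul_cancel₀ hsδ
end
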